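/- arXiv:1609.04547 — 3 statements merged into one kernel-verified Lean document; each statement's English description precedes it below -/
import Mathlib

section
/- Let G be a finite simple graph with degree sequence d_(1) ≥ d_(2) ≥ … ≥ d_(N) listed in non-increasing order, and let c be a {0,1}-characteristic on its vertices with n1 ≥ 1 vertices having characteristic 1. Then the number m11 of (1-1) edges satisfies m11 ≤ min( M, binom(n1,2), ⌈ (Σ_{i=1}^{n1} min(d_(i), n1 − 1)) / 2 ⌉ ), where the last sum ranges over the n1 largest degrees of G. -/
/-!
The (1-1) edges are the edges of the subgraph induced on the `n1` vertices of characteristic 1.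
By the handshake lemma, twice their number is the sum of the induced degrees, and the induced
degree of `v` is at most `min (deg v) (n1 - 1)`. Bounding each term by `n1 - 1` gives
`binom(n1, 2)`; otherwise, since the degree sequence is non-increasing, a sum over any `n1`
vertices is at most the sum over the first `n1` entries of the sequence.
-/

/-- The number of edges of `G` whose two endpoints both have characteristic `1` (`true`). -/
def m11 {V : Type*} [Fintype V] [DecidableEq V] (G : SimpleGraph V) [DecidableRel G.Adj]
    (c : V → Bool) : ℕ :=
  (G.edgeFinset.filter (fun e => ∀ v ∈ e, c v = true)).card

open Finset

theorem StrictMono.val_le_val_apply {m n : ℕ} {f : Fin m → Fin n} (hf : StrictMono f)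
    (k : Fin m) : (k : ℕ) ≤ f k := by
  have hsub : (Iic k).image f ⊆ Iic (f k) := fun _ hx ↦ by
    obtain ⟨j, hj, rfl⟩ := mem_image.1 hx
    exact mem_Iic.2 (hf.monotone (mem_Iic.1 hj))
  simpa [card_image_of_injective _ hf.injective] using card_le_card hsub

theorem Antitone.sum_le_sum_filter_val_lt_card {M : Type*} [AddCommMonoid M] [PartialOrder M]
    [IsOrderedAddMonoid M] {N : ℕ} {g : Fin N → M} (hg : Antitone g) (T : Finset (Fin N)) :
    ∑ i ∈ T, g i ≤ ∑ i ∈ univ.filter (fun i : Fin N ↦ (i : ℕ) < #T), g i := by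
  have hT : #T ≤ N := by simpa using card_le_univ T
  have hinit : univ.filter (fun i : Fin N ↦ (i : ℕ) < #T) = univ.map (Fin.castLEEmb hT) := by
    ext i
    simpa using ⟨fun h ↦ ⟨⟨i, h⟩, rfl⟩, by rintro ⟨k, rfl⟩; exact k.2⟩
  calc ∑ i ∈ T, g i = ∑ k, g (T.orderEmbOfFin rfl k) := by
        conv_lhs => rw [← map_orderEmbOfFin_univ T rfl, sum_map]
        rfl
    _ ≤ ∑ k, g (Fin.castLEEmb hT k) :=
        sum_le_sum fun k _ ↦ hg ((T.orderEmbOfFin rfl).strictMono.val_le_val_apply k)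
    _ = _ := by rw [hinit, sum_map]

namespace SimpleGraph

variable {V : Type*} [Fintype V] (G : SimpleGraph V) [DecidableRel G.Adj]

theorem degree_induce_le_min (s : Finset V) (v : s) :
    (G.induce (s : Set V)).degree v ≤ min (G.degree v) (#s - 1) := by
  refine le_min ((Embedding.induce (s : Set V)).toCopy.degree_le v) ?_
  have := (G.induce (s : Set V)).degree_lt_card_verts v
  simp only [coe_sort_coe, Fintype.card_coe] at this
  omega

variable [DecidableEq V]

theorem card_edgeFinset_induce_eq_card_filter (s : Finset V) :
    #(G.induce (s : Set V)).edgeFinset = #{e ∈ G.edgeFinset | ∀ v ∈ e, v ∈ s} := by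
  convert congr_arg card (G.map_edgeFinset_induce (s := (s : Set V))) using 1
  · rw [card_map]
    congr!
  · congr 1
    ext e
    simp [mem_sym2_iff]

theorem two_mul_card_filter_edgeFinset_le (s : Finset V) :
    2 * #{e ∈ G.edgeFinset | ∀ v ∈ e, v ∈ s} ≤ ∑ v ∈ s, min (G.degree v) (#s - 1) := by
  rw [← card_edgeFinset_induce_eq_card_filter, ← sum_degrees_eq_twice_card_edges,
    ← sum_coe_sort s]
  exact sum_le_sum fun v _ ↦ G.degree_induce_le_min s v

end SimpleGraph

theorem m11_upper_bound_general {V : Type*} [Fintype V] [DecidableEq V]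
    (G : SimpleGraph V) [DecidableRel G.Adj] (c : V → Bool)
    (N M n1 : ℕ) (hM : G.edgeFinset.card = M)
    (hn1 : (Finset.univ.filter (fun v => c v = true)).card = n1)
    (d : Fin N → ℕ) (hanti : Antitone d)
    (e : Fin N ≃ V) (hd : ∀ i, d i = G.degree (e i)) :
    m11 G c ≤ min M (min (n1.choose 2)
      (((∑ i ∈ Finset.univ.filter (fun i : Fin N => (i : ℕ) < n1),
          min (d i) (n1 - 1)) + 1) / 2)) := by
  set S := univ.filter (fun v ↦ c v = true)
  have hm11 : m11 G c = #{e ∈ G.edgeFinset | ∀ v ∈ e, v ∈ S} := by simp [m11, S]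
  have hdeg : 2 * m11 G c ≤ ∑ v ∈ S, min (G.degree v) (n1 - 1) :=
    hm11 ▸ hn1 ▸ G.two_mul_card_filter_edgeFinset_le S
  have hhead : ∑ v ∈ S, min (G.degree v) (n1 - 1)
      ≤ ∑ i ∈ univ.filter (fun i : Fin N ↦ (i : ℕ) < n1), min (d i) (n1 - 1) := by
    -- `simp` cannot rewrite `e (e.symm v)` under `G.degree`, whose `Fintype` instance depends on it
    have hdeg_eq (v : V) : G.degree v = d (e.symm v) := by
      obtain ⟨i, rfl⟩ := e.surjective v
      simp [hd]
    have := (hanti.min (antitone_const (c := n1 - 1))).sum_le_sum_filter_val_lt_card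
      (S.map e.symm.toEmbedding)
    simpa [hn1, hdeg_eq] using this
  have hchoose : 2 * m11 G c ≤ n1 * (n1 - 1) := by
    simpa [hn1] using hdeg.trans (sum_le_sum fun v _ ↦ min_le_right (G.degree v) (n1 - 1))
  have hM' : m11 G c ≤ M := hM ▸ card_filter_le _ _
  rw [Nat.choose_two_right]
  omega

/-- with the degree sequence `d : Fin N → ℕ` of `G` listed in non-increasing
order, `m11 ≤ min(M, binom(n1,2), ⌈(∑_{i=1}^{n1} min(d_(i), n1 - 1)) / 2⌉)`, the sum
ranging over the `n1` largest degrees.  The ceiling `⌈s/2⌉` is written `(s + 1) / 2` in ℕ. -/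
theorem m11_upper_bound {V : Type*} [Fintype V] [DecidableEq V]
    (G : SimpleGraph V) [DecidableRel G.Adj] (c : V → Bool)
    (N M n1 : ℕ) (hN : Fintype.card V = N) (hM : G.edgeFinset.card = M)
    (hn1 : (Finset.univ.filter (fun v => c v = true)).card = n1) (hn1pos : 1 ≤ n1)
    (d : Fin N → ℕ) (hanti : Antitone d)
    (e : Fin N ≃ V) (hd : ∀ i, d i = G.degree (e i)) :
    m11 G c ≤ min M (min (n1.choose 2)
      (((∑ i ∈ Finset.univ.filter (fun i : Fin N => (i : ℕ) < n1),
          min (d i) (n1 - 1)) + 1) / 2)) :=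
  m11_upper_bound_general G c N M n1 hM hn1 d hanti e hd
end

section
/- Let G= (V,E) be a finite simple graph with degree sequence d_(1) ≥ d_(2) ≥ … ≥ d_(N) listed in non-increasing order, and let c be a {0,1}-characteristic on its vertices with n1 vertices having characteristic 1 and n0 = N − n1 having characteristic 0. Let T(n1) = Σ_{i=N−n1+1}^{N} d_(i) be the sum of the n1 smallest degrees and H(n0) = Σ_{i=1}^{n0} d_(i) the sum of the n0 largest degrees. Then the number m11 of (1-1) edges satisfies m11 ≥ ⌊ (T(n1) − H(n0)) / 2 ⌋ whenever T(n1) ≥ H(n0); in particular m11 ≥ max(0, ⌊(T(n1) − H(n0))/2⌋) with the difference taken in the integers. -/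
/-!
Counting darts, the degree sum over the vertices of characteristic 1 is twice the number of
(1-1) edges plus the number of (1-0) edges, and the latter is at most the degree sum over the
vertices of characteristic 0. As the degrees are sorted, `T(n1)` is at most the first of these
degree sums and `H(n0)` at least the second, whence `T(n1) - H(n0) ≤ 2 m11`.
-/

open Finset

namespace Finset

variable {ι M : Type*} [AddCommMonoid M] [LinearOrder M] [IsOrderedAddMonoid M]

theorem sum_le_sum_of_card_eq_of_forall_sdiff_le [DecidableEq ι] {f : ι → M} {s t : Finset ι}
    (hst : #s = #t) (h : ∀ i ∈ s \ t, ∀ j ∈ t \ s, f i ≤ f j) :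
    ∑ i ∈ s, f i ≤ ∑ i ∈ t, f i := by
  rw [← sum_inter_add_sum_sdiff s t, ← sum_inter_add_sum_sdiff t s, inter_comm]
  refine add_le_add le_rfl ?_
  rcases (s \ t).eq_empty_or_nonempty with hs | hs
  · have ht : t \ s = ∅ := by rw [← card_eq_zero, ← card_sdiff_comm hst, hs, card_empty]
    simp [hs, ht]
  obtain ⟨i₀, hi₀, hmax⟩ := exists_max_image (s \ t) f hs
  calc ∑ i ∈ s \ t, f i ≤ #(s \ t) • f i₀ := sum_le_card_nsmul _ _ _ hmax
    _ = #(t \ s) • f i₀ := by rw [card_sdiff_comm hst]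
    _ ≤ ∑ j ∈ t \ s, f j := card_nsmul_le_sum _ _ _ (h i₀ hi₀)

end Finset

namespace Fin

theorem card_filter_sub_le_val {N k : ℕ} (hk : k ≤ N) :
    #{i : Fin N | N - k ≤ (i : ℕ)} = k := by
  have hlt := card_filter_val_lt (n := N) (m := N - k)
  have hsplit :=
    card_filter_add_card_filter_not (s := (univ : Finset (Fin N))) (fun i => (i : ℕ) < N - k)
  simp only [not_lt, card_univ, Fintype.card_fin] at hsplit
  omega

end Fin

namespace Antitone

variable {M : Type*} [AddCommMonoid M] [LinearOrder M] [IsOrderedAddMonoid M]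
  {N k : ℕ} {f : Fin N → M} {s : Finset (Fin N)}

theorem sum_le_sum_filter_val_lt (hf : Antitone f) (hs : #s = k) :
    ∑ i ∈ s, f i ≤ ∑ i ∈ univ.filter (fun i : Fin N => (i : ℕ) < k), f i := by
  have hk : k ≤ N := hs ▸ card_le_univ s |>.trans_eq (Fintype.card_fin N)
  refine sum_le_sum_of_card_eq_of_forall_sdiff_le ?_ fun i hi j hj => hf ?_
  · rw [hs, Fin.card_filter_val_lt, min_eq_right hk]
  · simp only [mem_sdiff, mem_filter, mem_univ, true_and] at hi hj
    exact Fin.le_def.2 (by omega)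

theorem sum_filter_sub_le_val_le_sum (hf : Antitone f) (hs : #s = k) :
    ∑ i ∈ univ.filter (fun i : Fin N => N - k ≤ (i : ℕ)), f i ≤ ∑ i ∈ s, f i := by
  have hk : k ≤ N := hs ▸ card_le_univ s |>.trans_eq (Fintype.card_fin N)
  refine sum_le_sum_of_card_eq_of_forall_sdiff_le ?_ fun i hi j hj => hf ?_
  · rw [hs, Fin.card_filter_sub_le_val hk]
  · simp only [mem_sdiff, mem_filter, mem_univ, true_and] at hi hj
    exact Fin.le_def.2 (by omega)

end Antitone

namespace SimpleGraph

variable {V : Type*} [Fintype V] [DecidableEq V] (G : SimpleGraph V) [DecidableRel G.Adj]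

theorem sum_degree_eq_card_filter_dart_fst (A : Finset V) :
    ∑ v ∈ A, G.degree v = #{d : G.Dart | d.fst ∈ A} := by
  rw [card_eq_sum_card_fiberwise (s := {d : G.Dart | d.fst ∈ A}) (t := A) (f := fun d => d.fst)
    fun d hd => (mem_filter.1 hd).2]
  refine sum_congr rfl fun v hv => ?_
  rw [filter_filter, ← dart_fst_fiber_card_eq_degree]
  congr 1
  exact filter_congr fun d _ => ⟨fun h => ⟨h ▸ hv, h⟩, And.right⟩

theorem card_filter_dart_edge_eq_two_mul (q : Sym2 V → Prop) [DecidablePred q] :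
    #{d : G.Dart | q d.edge} = 2 * #{e ∈ G.edgeFinset | q e} := by
  rw [card_eq_sum_card_fiberwise (f := Dart.edge) (t := {e ∈ G.edgeFinset | q e})
    (fun d hd => mem_filter.2 ⟨mem_edgeFinset.2 d.edge_mem, (mem_filter.1 hd).2⟩),
    mul_comm, ← smul_eq_mul, ← sum_const]
  refine sum_congr rfl fun e he => ?_
  obtain ⟨he, hq⟩ := mem_filter.1 he
  rw [filter_filter, ← dart_edge_fiber_card G e (mem_edgeFinset.1 he)]
  congr 1
  exact filter_congr fun d _ => ⟨And.right, fun h => ⟨h ▸ hq, h⟩⟩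

theorem sum_degree_le_two_mul_card_edges_add_sum_degree (p : V → Prop) [DecidablePred p] :
    ∑ v with p v, G.degree v ≤
      2 * #{e ∈ G.edgeFinset | ∀ v ∈ e, p v} + ∑ v with ¬ p v, G.degree v := by
  simp only [sum_degree_eq_card_filter_dart_fst, mem_filter, mem_univ, true_and]
  have hinside : #{d : G.Dart | p d.fst ∧ p d.snd} = #{d : G.Dart | ∀ v ∈ d.edge, p v} := by
    congr 1
    exact filter_congr fun d _ => by simp [Dart.edge]
  have hcross : #{d : G.Dart | p d.fst ∧ ¬ p d.snd} ≤ #{d : G.Dart | ¬ p d.fst} :=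
    card_le_card_of_injOn Dart.symm (fun d hd => by simp_all)
      (fun d _ d' _ h => by simpa using congrArg Dart.symm h)
  rw [← card_filter_dart_edge_eq_two_mul, ← hinside,
    ← card_filter_add_card_filter_not (s := {d : G.Dart | p d.fst}) (fun d => p d.snd),
    filter_filter, filter_filter]
  exact add_le_add le_rfl hcross

end SimpleGraph

/-- with `T = T(n1)` the sum of the `n1` smallest degrees and `H = H(n0)` the
sum of the `n0` largest degrees (taken in ℤ), `m11 ≥ ⌊(T − H)/2⌋` whenever `T ≥ H`; in
particular `m11 ≥ max 0 ⌊(T − H)/2⌋`.  Floor division is `Int.fdiv`. -/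
theorem m11_lower_bound {V : Type*} [Fintype V] [DecidableEq V]
    (G : SimpleGraph V) [DecidableRel G.Adj] (c : V → Bool)
    (N n1 n0 : ℕ) (hN : Fintype.card V = N)
    (hn1 : (Finset.univ.filter (fun v => c v = true)).card = n1)
    (hn0 : n0 = N - n1)
    (d : Fin N → ℕ) (hanti : Antitone d)
    (e : Fin N ≃ V) (hd : ∀ i, d i = G.degree (e i))
    (T H : ℤ)
    (hT : T = ∑ i ∈ Finset.univ.filter (fun i : Fin N => N - n1 ≤ (i : ℕ)), (d i : ℤ))
    (hH : H = ∑ i ∈ Finset.univ.filter (fun i : Fin N => (i : ℕ) < n0), (d i : ℤ)) :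
    (H ≤ T → (m11 G c : ℤ) ≥ (T - H).fdiv 2) ∧
      (m11 G c : ℤ) ≥ max 0 ((T - H).fdiv 2) := by
  set A := univ.filter (fun v => c v = true)
  set B := univ.filter (fun v => ¬ c v = true)
  have hsum (S : Finset V) : ∑ v ∈ S, G.degree v = ∑ i ∈ S.map e.symm.toEmbedding, d i := by
    rw [sum_map]
    exact sum_congr rfl fun v _ => by rw [Equiv.toEmbedding_apply, hd, e.apply_symm_apply]
  have hB : #(B.map e.symm.toEmbedding) = n0 := by
    have hAB : #A + #B = Fintype.card V := card_filter_add_card_filter_not _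
    rw [card_map]
    omega
  have hTA : T ≤ ∑ v ∈ A, (G.degree v : ℤ) := by
    rw [hT, ← Nat.cast_sum, ← Nat.cast_sum, hsum]
    exact_mod_cast hanti.sum_filter_sub_le_val_le_sum (by rw [card_map, hn1])
  have hBH : ∑ v ∈ B, (G.degree v : ℤ) ≤ H := by
    rw [hH, ← Nat.cast_sum, ← Nat.cast_sum, hsum]
    exact_mod_cast hanti.sum_le_sum_filter_val_lt hB
  have hdeg : ∑ v ∈ A, (G.degree v : ℤ) ≤ 2 * m11 G c + ∑ v ∈ B, (G.degree v : ℤ) :=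
    mod_cast G.sum_degree_le_two_mul_card_edges_add_sum_degree (fun v => c v = true)
  have hfdiv : (T - H).fdiv 2 ≤ m11 G c := by
    rw [Int.fdiv_eq_ediv_of_nonneg _ (by norm_num)]
    omega
  exact ⟨fun _ => hfdiv, max_le (by positivity) hfdiv⟩
end

section
/- Let G be a finite connected simple graph on N vertices with degree sequence d_(1) ≥ d_(2) ≥ … ≥ d_(N) listed in non-increasing order, and let c be a {0,1}-characteristic on its vertices with n1 vertices having characteristic 1, where 0 < n1 < N. Let T(n1) = Σ_{i=N−n1+1}^{N} d_(i) be the sum of the n1 smallest degrees. Then the number m10 of mixed (1-0) edges satisfies m10 ≥ max( 1, T(n1) − n1(n1 − 1) ), the difference being taken in the integers. -/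
/-! Let `S = {c = 1}`. Each `v ∈ S` has at most `n₁ - 1` neighbours inside `S`, so
`∑_{v ∈ S} deg v ≤ n₁(n₁ - 1) + e(S, Sᶜ)`, and every edge between `S` and `Sᶜ` is mixed. Being a sum
of `n₁` degrees, the left-hand side is at least `T(n₁)`. Connectedness, with `S` and `Sᶜ` nonempty,
gives `e(S, Sᶜ) ≥ 1`. -/

/-- The number of edges of `G` with one endpoint of characteristic `1` and one of
characteristic `0`. -/
def m10 {V : Type*} [Fintype V] [DecidableEq V] (G : SimpleGraph V) [DecidableRel G.Adj]
    (c : V → Bool) : ℕ :=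
  (G.edgeFinset.filter (fun e => (∃ v ∈ e, c v = true) ∧ (∃ v ∈ e, c v = false))).card

open Finset

section
variable {ι M : Type*} [LinearOrder ι] [LocallyFiniteOrderTop ι]
  [AddCommMonoid M] [PartialOrder M] [IsOrderedAddMonoid M]

theorem Antitone.sum_Ici_le_sum_of_card_eq {d : ι → M} (hd : Antitone d) (p : ι)
    {A : Finset ι} (hA : #A = #(Ici p)) : ∑ i ∈ Ici p, d i ≤ ∑ i ∈ A, d i := by
  classical
  have hcard : #(Ici p \ A) = #(A \ Ici p) := by
    have h1 := card_inter_add_card_sdiff (Ici p) A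
    have h2 := card_inter_add_card_sdiff A (Ici p)
    rw [inter_comm] at h2
    omega
  have hdiff : ∑ i ∈ Ici p \ A, d i ≤ ∑ i ∈ A \ Ici p, d i :=
    calc ∑ i ∈ Ici p \ A, d i ≤ #(Ici p \ A) • d p :=
          sum_le_card_nsmul _ _ _ fun i hi => hd (mem_Ici.mp (mem_sdiff.mp hi).1)
      _ = #(A \ Ici p) • d p := by rw [hcard]
      _ ≤ ∑ i ∈ A \ Ici p, d i :=
          card_nsmul_le_sum _ _ _ fun i hi =>
            hd (le_of_not_ge (mt mem_Ici.mpr (mem_sdiff.mp hi).2))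
  calc ∑ i ∈ Ici p, d i = ∑ i ∈ Ici p ∩ A, d i + ∑ i ∈ Ici p \ A, d i :=
        (sum_inter_add_sum_sdiff _ _ _).symm
    _ ≤ ∑ i ∈ A ∩ Ici p, d i + ∑ i ∈ A \ Ici p, d i := by rw [inter_comm]; gcongr
    _ = ∑ i ∈ A, d i := sum_inter_add_sum_sdiff _ _ _
end

namespace SimpleGraph
variable {V : Type*} {G : SimpleGraph V} [DecidableRel G.Adj]

theorem card_interedges_self_le (s : Finset V) : #(G.interedges s s) ≤ #s * (#s - 1) := by
  calc #(G.interedges s s) ≤ #s.offDiag := card_le_card fun x hx => by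
        obtain ⟨h1, h2, hadj⟩ := G.mem_interedges_iff.mp hx
        exact mem_offDiag.mpr ⟨h1, h2, hadj.ne⟩
    _ = #s * (#s - 1) := by rw [offDiag_card, Nat.mul_sub_one]

variable [Fintype V] [DecidableEq V]

theorem card_interedges_eq_sum_card_inter_neighborFinset (s t : Finset V) :
    #(G.interedges s t) = ∑ v ∈ s, #(G.neighborFinset v ∩ t) := by
  rw [interedges, Rel.interedges_eq_biUnion, card_biUnion]
  · refine sum_congr rfl fun v _ => ?_
    rw [card_map, neighborFinset_eq_filter, filter_inter, univ_inter]
  · intro v _ w _ hvw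
    rw [Function.onFun, Finset.disjoint_left]
    simp only [mem_map, Function.Embedding.coeFn_mk, not_exists, not_and]
    rintro _ ⟨_, _, rfl⟩ _ _ h
    exact hvw (congrArg Prod.fst h).symm

theorem card_interedges_le_m10 (c : V → Bool) :
    #(G.interedges (univ.filter (c · = true)) (univ.filter (c · = true))ᶜ) ≤ m10 G c := by
  refine card_le_card_of_injOn (fun x => s(x.1, x.2)) (fun x hx => ?_) fun x hx y hy hxy => ?_
  · obtain ⟨hx1, hx2, hadj⟩ := G.mem_interedges_iff.mp hx
    simp only [mem_compl, mem_filter, mem_univ, true_and] at hx1 hx2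
    exact mem_filter.mpr ⟨mem_edgeFinset.mpr hadj,
      ⟨_, Sym2.mem_mk_left _ _, hx1⟩, ⟨_, Sym2.mem_mk_right _ _, Bool.eq_false_iff.mpr hx2⟩⟩
  · obtain ⟨hx1, -, -⟩ := G.mem_interedges_iff.mp (mem_coe.mp hx)
    obtain ⟨-, hy2, -⟩ := G.mem_interedges_iff.mp (mem_coe.mp hy)
    rcases Sym2.mk_eq_mk_iff.mp hxy with h | h
    · exact h
    · simp only [Prod.ext_iff, Prod.fst_swap] at h
      exact absurd (h.1 ▸ hx1) (mem_compl.mp hy2)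

theorem sum_degree_le_card_mul_add_card_interedges_compl (s : Finset V) :
    ∑ v ∈ s, G.degree v ≤ #s * (#s - 1) + #(G.interedges s sᶜ) := by
  have hsplit : ∀ v, G.degree v = #(G.neighborFinset v ∩ s) + #(G.neighborFinset v ∩ sᶜ) :=
    fun v => by rw [← sdiff_eq_inter_compl, card_inter_add_card_sdiff, card_neighborFinset_eq_degree]
  simp only [hsplit, sum_add_distrib, ← card_interedges_eq_sum_card_inter_neighborFinset]
  exact Nat.add_le_add_right (G.card_interedges_self_le s) _

theorem Connected.interedges_compl_nonempty (hG : G.Connected) {s : Finset V} (hs : s.Nonempty) (hs' : sᶜ.Nonempty) :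
    (G.interedges s sᶜ).Nonempty := by
  obtain ⟨u, hu⟩ := hs
  obtain ⟨w, hw⟩ := hs'
  obtain ⟨d, -, hd, hd'⟩ := (hG u w).some.exists_boundary_dart s hu (mem_compl.mp hw)
  exact ⟨d.toProd, G.mem_interedges_iff.mpr ⟨hd, mem_compl.mpr hd', d.adj⟩⟩

end SimpleGraph

/-- for a connected graph with `0 < n1 < N`, with `T = T(n1)` the sum of the
`n1` smallest degrees (in ℤ), `m10 ≥ max(1, T − n1(n1 − 1))`. -/
theorem m10_lower_bound {V : Type*} [Fintype V] [DecidableEq V]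
    (G : SimpleGraph V) [DecidableRel G.Adj] (c : V → Bool)
    (hconn : G.Connected)
    (N n1 : ℕ) (hN : Fintype.card V = N)
    (hn1 : (Finset.univ.filter (fun v => c v = true)).card = n1)
    (hpos : 0 < n1) (hlt : n1 < N)
    (d : Fin N → ℕ) (hanti : Antitone d)
    (e : Fin N ≃ V) (hd : ∀ i, d i = G.degree (e i))
    (T : ℤ)
    (hT : T = ∑ i ∈ Finset.univ.filter (fun i : Fin N => N - n1 ≤ (i : ℕ)), (d i : ℤ)) :
    (m10 G c : ℤ) ≥ max 1 (T - (n1 : ℤ) * ((n1 : ℤ) - 1)) := by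
  set S := univ.filter (fun v => c v = true)
  have hcut := G.card_interedges_le_m10 c
  have hcut_pos : 0 < #(G.interedges S Sᶜ) := by
    refine (hconn.interedges_compl_nonempty (card_pos.mp (hn1 ▸ hpos)) ?_).card_pos
    rw [← card_pos, card_compl, hn1, hN]
    omega
  let p : Fin N := ⟨N - n1, by omega⟩
  have htail : univ.filter (fun i : Fin N => N - n1 ≤ (i : ℕ)) = Ici p := by
    ext i
    simp [p, Fin.le_def]
  have hT_le : T ≤ ∑ v ∈ S, (G.degree v : ℤ) := by
    have hcard : #(S.map e.symm.toEmbedding) = #(Ici p) := by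
      rw [card_map, hn1, Fin.card_Ici]
      show n1 = N - (N - n1)
      omega
    have hsum : ∑ i ∈ S.map e.symm.toEmbedding, d i = ∑ v ∈ S, G.degree v := by
      rw [sum_map]
      exact sum_congr rfl fun v _ => by rw [Equiv.coe_toEmbedding, hd, Equiv.apply_symm_apply]
    rw [hT, htail]
    exact_mod_cast (hanti.sum_Ici_le_sum_of_card_eq p hcard).trans_eq hsum
  have hdeg := G.sum_degree_le_card_mul_add_card_interedges_compl S
  rw [hn1] at hdeg
  rw [ge_iff_le, max_le_iff]
  constructor
  · exact_mod_cast hcut_pos.trans_le hcut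
  · zify [hpos] at hdeg
    linarith
end
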